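/- arXiv:0910.0277 — 4 statements merged into one kernel-verified Lean document; each statement's English description precedes it below -/
import Mathlib

section
/- For any three s-t graphs A, B, C, the s-t graphs (A ⊘ B) ⊘ C and A ⊘ (B ⊘ C) coincide: there is a graph isomorphism between them which maps the distinguished vertex s to s and t to t and which is an isometry with respect to the shortest-path metrics induced by the edge lengths. -/
open scoped ENNReal

/-- Cost of a chain (list of vertices): sum of the length function over consecutive pairs. -/
noncomputable def chainCost {α : Type} (len : α → α → ℝ≥0∞) : List α → ℝ≥0∞
  | a :: b :: l => len a b + chainCost len (b :: l)
  | _ => 0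
  termination_by l => l.length

/-- A finite weighted multigraph with two distinguished vertices `s` and `t`.
Edge lengths take values in `ℝ≥0∞`. -/
structure STGraph where
  V : Type
  E : Type
  finV : Fintype V
  finE : Fintype E
  ends : E → V × V
  elen : E → ℝ≥0∞
  s : V
  t : V

attribute [instance] STGraph.finV STGraph.finE

namespace STGraph

/-- The length between two vertices: the infimum of lengths of edges joining them
(`⊤` if there is no such edge). -/
noncomputable def lenFn (G : STGraph) (u v : G.V) : ℝ≥0∞ :=
  ⨅ e : {e : G.E // G.ends e = (u, v) ∨ G.ends e = (v, u)}, G.elen e.1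

/-- The shortest-path (extended) distance between two vertices. -/
noncomputable def edist (G : STGraph) (u v : G.V) : ℝ≥0∞ :=
  ⨅ l : {l : List G.V // l.head? = some u ∧ l.getLast? = some v}, chainCost G.lenFn l.1

/-- `len G` is the distance between the two distinguished vertices. -/
noncomputable def len (G : STGraph) : ℝ≥0∞ := G.edist G.s G.t

/-- An `s`-`t` graph is *proper* if all edge lengths are positive and finite, there are no
self-loops, the graph is connected, and `s ≠ t`. -/
def Proper (G : STGraph) : Prop :=
  (∀ e, 0 < G.elen e ∧ G.elen e < ⊤) ∧
  (∀ e, (G.ends e).1 ≠ (G.ends e).2) ∧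
  (∀ u v, G.edist u v ≠ ⊤) ∧ G.s ≠ G.t

/-- The inner (non-terminal) vertices of an `s`-`t` graph. -/
abbrev Inner (G : STGraph) : Type := {v : G.V // v ≠ G.s ∧ v ≠ G.t}

noncomputable instance (G : STGraph) : Fintype G.Inner := Fintype.ofFinite _

/-- Where a vertex `w` of `G` lands in `H ⊘ G` when the copy of `G` is glued along edge `e` of
`H`: `s(G)` and `t(G)` are identified with the endpoints of `e`. -/
noncomputable def endMap (H G : STGraph) (e : H.E) (w : G.V) : H.V ⊕ (H.E × G.Inner) := by
  classical
  exact if h : w = G.s then Sum.inl (H.ends e).1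
    else if h' : w = G.t then Sum.inl (H.ends e).2
    else Sum.inr (e, ⟨w, h, h'⟩)

/-- The composition `H ⊘ G`: every edge of `H` is replaced by a copy of `G`, with lengths in the
copy along `e` scaled by `len_H(e)/len(G)`. -/
noncomputable def oslash (H G : STGraph) : STGraph where
  V := H.V ⊕ (H.E × G.Inner)
  E := H.E × G.E
  finV := inferInstance
  finE := inferInstance
  ends := fun p => (endMap H G p.1 (G.ends p.2).1, endMap H G p.1 (G.ends p.2).2)
  elen := fun p => H.elen p.1 * G.elen p.2 / G.len
  s := Sum.inl H.s
  t := Sum.inl H.t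

/-- A single edge of unit length. -/
noncomputable def unitEdge : STGraph where
  V := Bool
  E := Unit
  finV := inferInstance
  finE := inferInstance
  ends := fun _ => (false, true)
  elen := fun _ => 1
  s := false
  t := true

/-- Recursive composition: `G^{⊘0}` is a single unit-length edge and
`G^{⊘k} = G^{⊘(k-1)} ⊘ G`. -/
noncomputable def iterOslash (G : STGraph) : ℕ → STGraph
  | 0 => unitEdge
  | k + 1 => oslash (iterOslash G k) G

end STGraph

/-!
Up to reassociation both graphs have vertex set `A.V ⊕ A.E × B.Inner ⊕ A.E × B.E × C.Inner` and
edge set `A.E × B.E × C.E`, with the same endpoints; the edge lengths agree as soon as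
`len (B ⊘ C) = len B`, and an edge-preserving isomorphism is an isometry because distances are
infima over paths.

`len (H ⊘ G) = len H` because the copy of `G` glued along an edge `f = (u, v)` of `H`, scaled by
`c = len_H f / len G`, joins `u` to `v` at cost exactly `len_H f`. Mapping `s`-`t` paths of `G`
into it gives `≤`. For `≥`, the potential equal to `d_H(s, ·)` on vertices of `H` and to
`min (d_H(s, u) + c d_G(s, w)) (d_H(s, v) + c d_G(t, w))` at an inner vertex `w` of that copy is
`1`-Lipschitz along every edge of `H ⊘ G`, so it bounds the distance from `s` below.
-/

section chainCost

variable {α : Type} {len : α → α → ℝ≥0∞}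

lemma chainCost_cons_cons (a b : α) (l : List α) :
    chainCost len (a :: b :: l) = len a b + chainCost len (b :: l) := by
  simp [chainCost]

@[simp]
lemma chainCost_singleton (a : α) : chainCost len [a] = 0 := by simp [chainCost]

lemma chainCost_append_singleton {l : List α} {v : α} (hl : l.getLast? = some v) (w : α) :
    chainCost len (l ++ [w]) = chainCost len l + len v w := by
  induction l with
  | nil => simp at hl
  | cons a l ih =>
    cases l with
    | nil =>
      obtain rfl : a = v := by simpa using hl
      simp [chainCost_cons_cons]
    | cons b l =>
      rw [List.getLast?_cons_cons] at hl
      rw [List.cons_append, List.cons_append, chainCost_cons_cons, ← List.cons_append, ih hl,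
        chainCost_cons_cons, add_assoc]

lemma chainCost_reverse (hlen : ∀ a b, len a b = len b a) (l : List α) :
    chainCost len l.reverse = chainCost len l := by
  induction l with
  | nil => rfl
  | cons a l ih =>
    cases l with
    | nil => rfl
    | cons b l =>
      rw [List.reverse_cons, chainCost_append_singleton (v := b) (by simp), ih,
        chainCost_cons_cons, hlen, add_comm]

lemma le_add_mul_chainCost (F : α → ℝ≥0∞) {k : ℝ≥0∞}
    (hF : ∀ u v, F v ≤ F u + k * len u v) :
    ∀ (l : List α) (u v : α), l.head? = some u → l.getLast? = some v →
      F v ≤ F u + k * chainCost len l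
  | [], _, _, h, _ => by simp at h
  | [a], u, v, hu, hv => by
    obtain rfl : u = a := by simpa using hu.symm
    obtain rfl : u = v := by simpa using hv
    simp
  | a :: b :: l, u, v, hu, hv => by
    obtain rfl : u = a := by simpa using hu.symm
    rw [List.getLast?_cons_cons] at hv
    calc F v ≤ F b + k * chainCost len (b :: l) := le_add_mul_chainCost F hF _ b v rfl hv
      _ ≤ F u + k * len u b + k * chainCost len (b :: l) := by gcongr; exact hF u b
      _ = F u + k * chainCost len (u :: b :: l) := by
        rw [chainCost_cons_cons, mul_add, add_assoc]

end chainCost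

namespace STGraph

section metric

variable {G : STGraph}

lemma lenFn_le_elen {u v : G.V} {e : G.E} (h : G.ends e = (u, v) ∨ G.ends e = (v, u)) :
    G.lenFn u v ≤ G.elen e :=
  iInf_le_of_le ⟨e, h⟩ le_rfl

lemma lenFn_symm (u v : G.V) : G.lenFn u v = G.lenFn v u :=
  le_antisymm (le_iInf fun e => lenFn_le_elen e.2.symm) (le_iInf fun e => lenFn_le_elen e.2.symm)

lemma edist_le_chainCost {u v : G.V} (l : List G.V) (hu : l.head? = some u)
    (hv : l.getLast? = some v) : G.edist u v ≤ chainCost G.lenFn l :=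
  iInf_le_of_le ⟨l, hu, hv⟩ le_rfl

lemma edist_self (u : G.V) : G.edist u u = 0 :=
  le_antisymm (by simpa using edist_le_chainCost (G := G) [u] rfl rfl) zero_le

lemma edist_le_lenFn (u v : G.V) : G.edist u v ≤ G.lenFn u v := by
  simpa [chainCost_cons_cons] using edist_le_chainCost (G := G) [u, v] rfl rfl

lemma edist_symm (u v : G.V) : G.edist u v = G.edist v u := by
  suffices ∀ a b : G.V, G.edist a b ≤ G.edist b a from le_antisymm (this u v) (this v u)
  refine fun a b => le_iInf fun ⟨l, ha, hb⟩ => ?_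
  rw [← chainCost_reverse lenFn_symm l]
  exact edist_le_chainCost l.reverse (by rwa [List.head?_reverse])
    (by rwa [List.getLast?_reverse])

lemma edist_le_edist_add_lenFn (u v w : G.V) :
    G.edist u w ≤ G.edist u v + G.lenFn v w := by
  conv_rhs => rw [edist, ENNReal.iInf_add]
  refine le_iInf fun ⟨l, hu, hv⟩ => ?_
  rw [← chainCost_append_singleton hv]
  exact edist_le_chainCost _ (by simp [List.head?_append, hu]) (by simp)

lemma le_add_mul_edist (F : G.V → ℝ≥0∞) {k : ℝ≥0∞} (hk : k ≠ ⊤)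
    (hF : ∀ u v, F v ≤ F u + k * G.lenFn u v) (u v : G.V) : F v ≤ F u + k * G.edist u v := by
  have : Nonempty {l : List G.V // l.head? = some u ∧ l.getLast? = some v} :=
    ⟨⟨[u, v], rfl, rfl⟩⟩
  rw [edist, ENNReal.mul_iInf fun h => absurd h hk, ENNReal.add_iInf]
  exact le_iInf fun l => le_add_mul_chainCost F hF l.1 u v l.2.1 l.2.2

lemma le_add_edist (F : G.V → ℝ≥0∞) (hF : ∀ u v, F v ≤ F u + G.lenFn u v) (u v : G.V) :
    F v ≤ F u + G.edist u v := by
  simpa using le_add_mul_edist F ENNReal.one_ne_top (by simpa using hF) u v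

lemma edist_triangle (u v w : G.V) : G.edist u w ≤ G.edist u v + G.edist v w := by
  simpa [edist_self] using le_add_edist (G.edist u) (edist_le_edist_add_lenFn u) v w

lemma le_add_lenFn_of_forall_edge (F : G.V → ℝ≥0∞)
    (hF : ∀ e, F (G.ends e).2 ≤ F (G.ends e).1 + G.elen e ∧
      F (G.ends e).1 ≤ F (G.ends e).2 + G.elen e)
    (u v : G.V) : F v ≤ F u + G.lenFn u v := by
  rw [lenFn, ENNReal.add_iInf]
  refine le_iInf fun ⟨e, he⟩ => ?_
  rcases he with he | he
  · simpa [he] using (hF e).1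
  · simpa [he] using (hF e).2

lemma edist_pos (hpos : ∀ e, 0 < G.elen e) {u v : G.V} (huv : u ≠ v) : 0 < G.edist u v := by
  have hε : 0 < ⨅ e, G.elen e := by
    rcases isEmpty_or_nonempty G.E with h | h
    · simp [iInf_of_empty]
    · obtain ⟨e₀, he₀⟩ := Finite.exists_min G.elen
      exact (hpos e₀).trans_le (le_iInf he₀)
  refine hε.trans_le (le_iInf fun ⟨l, hu, hv⟩ => ?_)
  obtain _ | ⟨a, _ | ⟨b, l⟩⟩ := l
  · simp at hu
  · simp only [List.head?_cons, List.getLast?_singleton, Option.some.injEq] at hu hv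
    exact absurd (hu.symm.trans hv) huv
  · have : ⨅ e, G.elen e ≤ G.lenFn a b := le_iInf fun e => iInf_le _ e.1
    exact this.trans (chainCost_cons_cons (len := G.lenFn) a b l ▸ le_self_add)

lemma s_ne_t_of_len_ne_zero (h : G.len ≠ 0) : G.s ≠ G.t := by
  rintro hst
  exact h (by rw [len, hst, edist_self])

end metric

section maps

variable {G G' : STGraph}

lemma edist_map_le (φ : G.V → G'.V) {k : ℝ≥0∞} (hk : k ≠ ⊤)
    (hφ : ∀ a b, G'.edist (φ a) (φ b) ≤ k * G.lenFn a b) (u v : G.V) :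
    G'.edist (φ u) (φ v) ≤ k * G.edist u v := by
  simpa [edist_self] using le_add_mul_edist (fun x => G'.edist (φ u) (φ x)) hk
    (fun a b => (edist_triangle (φ u) (φ a) (φ b)).trans (add_le_add le_rfl (hφ a b))) u v

lemma lenFn_map_le (φ : G.V → G'.V) (ψ : G.E → G'.E)
    (hends : ∀ e, G'.ends (ψ e) = Prod.map φ φ (G.ends e)) {k : ℝ≥0∞} (hk₀ : k ≠ 0)
    (hk : k ≠ ⊤) (hlen : ∀ e, G'.elen (ψ e) ≤ k * G.elen e) (u v : G.V) :
    G'.lenFn (φ u) (φ v) ≤ k * G.lenFn u v := by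
  conv_rhs => rw [lenFn, ENNReal.mul_iInf_of_ne hk₀ hk]
  refine le_iInf fun ⟨e, he⟩ => (lenFn_le_elen ?_).trans (hlen e)
  rcases he with he | he <;> simp [hends, he]

lemma edist_map_le_of_ends (φ : G.V → G'.V) (ψ : G.E → G'.E)
    (hends : ∀ e, G'.ends (ψ e) = Prod.map φ φ (G.ends e)) {k : ℝ≥0∞} (hk₀ : k ≠ 0)
    (hk : k ≠ ⊤) (hlen : ∀ e, G'.elen (ψ e) ≤ k * G.elen e) (u v : G.V) :
    G'.edist (φ u) (φ v) ≤ k * G.edist u v :=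
  edist_map_le φ hk
    (fun a b => (edist_le_lenFn _ _).trans (lenFn_map_le φ ψ hends hk₀ hk hlen a b)) u v

lemma edist_map_eq (φ : G.V ≃ G'.V) (ψ : G.E ≃ G'.E)
    (hends : ∀ e, G'.ends (ψ e) = Prod.map φ φ (G.ends e))
    (hlen : ∀ e, G'.elen (ψ e) = G.elen e) (u v : G.V) :
    G'.edist (φ u) (φ v) = G.edist u v := by
  have hends' : ∀ e, G.ends (ψ.symm e) = Prod.map φ.symm φ.symm (G'.ends e) := fun e => by
    rw [← ψ.apply_symm_apply e, hends, ψ.symm_apply_apply, Prod.map_map]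
    simp
  apply le_antisymm
  · simpa using edist_map_le_of_ends φ ψ hends one_ne_zero ENNReal.one_ne_top
      (fun e => by simp [hlen]) u v
  · simpa using edist_map_le_of_ends φ.symm ψ.symm hends' one_ne_zero ENNReal.one_ne_top
      (fun e => by simp [← hlen]) (φ u) (φ v)

end maps

section oslash

variable {H G : STGraph}

lemma endMap_s (e : H.E) : endMap H G e G.s = Sum.inl (H.ends e).1 := by
  simp [endMap]

lemma endMap_t (hG : G.s ≠ G.t) (e : H.E) : endMap H G e G.t = Sum.inl (H.ends e).2 := by
  simp [endMap, hG.symm]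

lemma endMap_of_ne_of_ne {w : G.V} (hs : w ≠ G.s) (ht : w ≠ G.t) (e : H.E) :
    endMap H G e w = Sum.inr (e, ⟨w, hs, ht⟩) := by
  simp [endMap, hs, ht]

lemma oslash_ends (p : H.E × G.E) :
    (oslash H G).ends p = Prod.map (endMap H G p.1) (endMap H G p.1) (G.ends p.2) := rfl

lemma oslash_elen (p : H.E × G.E) :
    (oslash H G).elen p = H.elen p.1 / G.len * G.elen p.2 := by
  simp only [oslash, div_eq_mul_inv, mul_right_comm]

lemma edist_inl_ends_le (hG₀ : G.len ≠ 0) (hG : G.len ≠ ⊤) {f : H.E}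
    (hf₀ : H.elen f ≠ 0) (hf : H.elen f ≠ ⊤) :
    (oslash H G).edist (Sum.inl (H.ends f).1) (Sum.inl (H.ends f).2) ≤ H.elen f := by
  have hc₀ : H.elen f / G.len ≠ 0 := ENNReal.div_ne_zero.2 ⟨hf₀, hG⟩
  have hc : H.elen f / G.len ≠ ⊤ := ENNReal.div_ne_top hf hG₀
  have := edist_map_le_of_ends (G' := oslash H G) (endMap H G f) (Prod.mk f)
    (fun g => oslash_ends (f, g)) hc₀ hc (fun g => (oslash_elen (f, g)).le) G.s G.t
  rwa [endMap_s, endMap_t (s_ne_t_of_len_ne_zero hG₀), ← len,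
    ENNReal.div_mul_cancel hG₀ hG] at this

lemma len_oslash_le (hH : ∀ f, 0 < H.elen f ∧ H.elen f < ⊤) (hG₀ : G.len ≠ 0)
    (hG : G.len ≠ ⊤) : (oslash H G).len ≤ H.len := by
  have hinl : ∀ a b, (oslash H G).edist (Sum.inl a) (Sum.inl b) ≤ 1 * H.lenFn a b := by
    intro a b
    rw [one_mul, lenFn]
    refine le_iInf fun ⟨f, hf⟩ => ?_
    have hfab := edist_inl_ends_le hG₀ hG (hH f).1.ne' (hH f).2.ne
    rcases hf with hf | hf <;> simp only [hf] at hfab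
    · exact hfab
    · exact (edist_symm (G := oslash H G) _ _).trans_le hfab
  have := edist_map_le (G' := oslash H G) Sum.inl ENNReal.one_ne_top hinl H.s H.t
  rwa [one_mul] at this

noncomputable def copyPotential (H G : STGraph) (f : H.E) (w : G.V) : ℝ≥0∞ :=
  min (H.edist H.s (H.ends f).1 + H.elen f / G.len * G.edist G.s w)
    (H.edist H.s (H.ends f).2 + H.elen f / G.len * G.edist G.t w)

noncomputable def oslashPotential (H G : STGraph) : (oslash H G).V → ℝ≥0∞ :=
  Sum.elim (H.edist H.s) fun p => copyPotential H G p.1 p.2.1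

lemma copyPotential_le (f : H.E) (w w' : G.V) :
    copyPotential H G f w' ≤ copyPotential H G f w + H.elen f / G.len * G.lenFn w w' := by
  unfold copyPotential
  rw [← min_add_add_right, add_assoc, add_assoc, ← mul_add, ← mul_add]
  gcongr <;> exact edist_le_edist_add_lenFn _ _ _

lemma oslashPotential_endMap (hG₀ : G.len ≠ 0) (hG : G.len ≠ ⊤) (f : H.E) (w : G.V) :
    oslashPotential H G (endMap H G f w) = copyPotential H G f w := by
  have hc : H.elen f / G.len * G.edist G.s G.t = H.elen f := ENNReal.div_mul_cancel hG₀ hG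
  have h₁₂ : H.edist H.s (H.ends f).2 ≤ H.edist H.s (H.ends f).1 + H.elen f :=
    (edist_le_edist_add_lenFn _ _ _).trans (by gcongr; exact lenFn_le_elen (Or.inl rfl))
  have h₂₁ : H.edist H.s (H.ends f).1 ≤ H.edist H.s (H.ends f).2 + H.elen f :=
    (edist_le_edist_add_lenFn _ _ _).trans (by gcongr; exact lenFn_le_elen (Or.inr rfl))
  by_cases hs : w = G.s
  · subst hs
    simp [endMap_s, oslashPotential, copyPotential, edist_self, edist_symm G.t, hc, h₂₁]
  by_cases ht : w = G.t
  · subst ht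
    simp [endMap_t (s_ne_t_of_len_ne_zero hG₀), oslashPotential, copyPotential, edist_self,
      hc, h₁₂]
  · simp [endMap, hs, ht, oslashPotential]

lemma le_len_oslash (hG₀ : G.len ≠ 0) (hG : G.len ≠ ⊤) : H.len ≤ (oslash H G).len := by
  have hlip : ∀ u v,
      oslashPotential H G v ≤ oslashPotential H G u + (oslash H G).lenFn u v := by
    refine le_add_lenFn_of_forall_edge _ fun ⟨f, g⟩ => ?_
    simp only [oslash_ends, Prod.map_fst, Prod.map_snd, oslashPotential_endMap hG₀ hG,
      oslash_elen]
    exact ⟨(copyPotential_le f _ _).trans (by gcongr; exact lenFn_le_elen (Or.inl rfl)),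
      (copyPotential_le f _ _).trans (by gcongr; exact lenFn_le_elen (Or.inr rfl))⟩
  have := le_add_edist (oslashPotential H G) hlip (oslash H G).s (oslash H G).t
  simpa [oslashPotential, oslash, edist_self, len] using this

lemma len_oslash (hH : ∀ f, 0 < H.elen f ∧ H.elen f < ⊤) (hG₀ : G.len ≠ 0)
    (hG : G.len ≠ ⊤) : (oslash H G).len = H.len :=
  le_antisymm (len_oslash_le hH hG₀ hG) (le_len_oslash hG₀ hG)

end oslash

lemma Proper.len_ne_zero {G : STGraph} (hG : G.Proper) : G.len ≠ 0 :=
  (edist_pos (fun e => (hG.1 e).1) hG.2.2.2).ne'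

lemma Proper.len_ne_top {G : STGraph} (hG : G.Proper) : G.len ≠ ⊤ := hG.2.2.1 _ _

section assoc

variable (A B C : STGraph)

def oslashAssocEquiv : (oslash (oslash A B) C).V ≃ (oslash A (oslash B C)).V where
  toFun
    | .inl (.inl a) => .inl a
    | .inl (.inr (e, b)) =>
      .inr (e, ⟨.inl b.1, fun h => b.2.1 (Sum.inl_injective h),
        fun h => b.2.2 (Sum.inl_injective h)⟩)
    | .inr ((e, f), c) => .inr (e, ⟨.inr (f, c), Sum.inr_ne_inl, Sum.inr_ne_inl⟩)
  invFun
    | .inl a => .inl (.inl a)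
    | .inr (e, ⟨.inl b, hb⟩) =>
      .inl (.inr (e, ⟨b, fun h => hb.1 (congrArg Sum.inl h),
        fun h => hb.2 (congrArg Sum.inl h)⟩))
    | .inr (e, ⟨.inr (f, c), _⟩) => .inr ((e, f), c)
  left_inv := by rintro ((a | ⟨e, b⟩) | ⟨⟨e, f⟩, c⟩) <;> rfl
  right_inv := by rintro (a | ⟨e, ⟨b | ⟨f, c⟩, hb⟩⟩) <;> rfl

variable {A B C}

lemma oslashAssocEquiv_inl_endMap (f : A.E) (b : B.V) :
    oslashAssocEquiv A B C (Sum.inl (endMap A B f b)) = endMap A (oslash B C) f (Sum.inl b) := by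
  by_cases hs : b = B.s
  · subst hs
    rw [endMap_s]
    exact (endMap_s (G := oslash B C) f).symm
  by_cases ht : b = B.t
  · subst ht
    rw [endMap_t (Ne.symm hs)]
    exact (endMap_t (G := oslash B C) (fun h => hs (Sum.inl_injective h).symm) f).symm
  · rw [endMap_of_ne_of_ne hs ht, endMap_of_ne_of_ne (G := oslash B C)
      (fun h => hs (Sum.inl_injective h)) (fun h => ht (Sum.inl_injective h))]
    rfl

lemma oslashAssocEquiv_endMap (hC : C.s ≠ C.t) (p : (oslash A B).E) (w : C.V) :
    oslashAssocEquiv A B C (endMap (oslash A B) C p w) =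
      endMap A (oslash B C) p.1 (endMap B C p.2 w) := by
  by_cases hs : w = C.s
  · subst hs
    rw [endMap_s, endMap_s]
    exact oslashAssocEquiv_inl_endMap p.1 (B.ends p.2).1
  by_cases ht : w = C.t
  · subst ht
    rw [endMap_t hC, endMap_t hC]
    exact oslashAssocEquiv_inl_endMap p.1 (B.ends p.2).2
  · rw [endMap_of_ne_of_ne hs ht, endMap_of_ne_of_ne hs ht,
      endMap_of_ne_of_ne (G := oslash B C) Sum.inr_ne_inl Sum.inr_ne_inl]
    rfl

lemma oslash_assoc_ends (hC : C.s ≠ C.t) (e : (oslash (oslash A B) C).E) :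
    (oslash A (oslash B C)).ends (Equiv.prodAssoc A.E B.E C.E e) =
      Prod.map (oslashAssocEquiv A B C) (oslashAssocEquiv A B C)
        ((oslash (oslash A B) C).ends e) :=
  Prod.ext (oslashAssocEquiv_endMap hC e.1 (C.ends e.2).1).symm
    (oslashAssocEquiv_endMap hC e.1 (C.ends e.2).2).symm

lemma oslash_assoc_elen (hBC : (oslash B C).len = B.len) (e : (oslash (oslash A B) C).E) :
    (oslash A (oslash B C)).elen (Equiv.prodAssoc A.E B.E C.E e) =
      (oslash (oslash A B) C).elen e := by
  show A.elen e.1.1 * (B.elen e.1.2 * C.elen e.2 / C.len) / (oslash B C).len =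
    A.elen e.1.1 * B.elen e.1.2 / B.len * C.elen e.2 / C.len
  simp only [hBC, div_eq_mul_inv]
  ring

end assoc

end STGraph

open STGraph in
theorem oslash_assoc_general (A B C : STGraph) (hB : B.Proper) (hC : C.Proper) :
    ∃ (φ : (oslash (oslash A B) C).V ≃ (oslash A (oslash B C)).V)
      (ψ : (oslash (oslash A B) C).E ≃ (oslash A (oslash B C)).E),
      φ (oslash (oslash A B) C).s = (oslash A (oslash B C)).s ∧
      φ (oslash (oslash A B) C).t = (oslash A (oslash B C)).t ∧
      (∀ e : (oslash (oslash A B) C).E,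
        ((oslash A (oslash B C)).ends (ψ e) =
            (φ ((oslash (oslash A B) C).ends e).1, φ ((oslash (oslash A B) C).ends e).2) ∨
          (oslash A (oslash B C)).ends (ψ e) =
            (φ ((oslash (oslash A B) C).ends e).2, φ ((oslash (oslash A B) C).ends e).1))) ∧
      (∀ e : (oslash (oslash A B) C).E,
        (oslash A (oslash B C)).elen (ψ e) = (oslash (oslash A B) C).elen e) ∧
      (∀ u v : (oslash (oslash A B) C).V,
        (oslash A (oslash B C)).edist (φ u) (φ v) = (oslash (oslash A B) C).edist u v) := by
  have hends := oslash_assoc_ends (A := A) (B := B) hC.2.2.2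
  have hlen := oslash_assoc_elen (A := A) (len_oslash hB.1 hC.len_ne_zero hC.len_ne_top)
  exact ⟨oslashAssocEquiv A B C, Equiv.prodAssoc A.E B.E C.E, rfl, rfl, fun e => Or.inl (hends e),
    hlen, edist_map_eq _ _ hends hlen⟩

open STGraph in
/-- Associativity of `⊘`: for any three (proper) `s`-`t` graphs `A`, `B`, `C`, the graphs
`(A ⊘ B) ⊘ C` and `A ⊘ (B ⊘ C)` coincide: there is a graph isomorphism (a pair of
bijections on vertices and edges, compatible with endpoints and preserving edge lengths)
which maps `s` to `s` and `t` to `t` and which is an isometry for the shortest-path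
metrics. -/
theorem oslash_assoc (A B C : STGraph) (hA : A.Proper) (hB : B.Proper) (hC : C.Proper) :
    ∃ (φ : (oslash (oslash A B) C).V ≃ (oslash A (oslash B C)).V)
      (ψ : (oslash (oslash A B) C).E ≃ (oslash A (oslash B C)).E),
      φ (oslash (oslash A B) C).s = (oslash A (oslash B C)).s ∧
      φ (oslash (oslash A B) C).t = (oslash A (oslash B C)).t ∧
      (∀ e : (oslash (oslash A B) C).E,
        ((oslash A (oslash B C)).ends (ψ e) =
            (φ ((oslash (oslash A B) C).ends e).1, φ ((oslash (oslash A B) C).ends e).2) ∨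
          (oslash A (oslash B C)).ends (ψ e) =
            (φ ((oslash (oslash A B) C).ends e).2, φ ((oslash (oslash A B) C).ends e).1))) ∧
      (∀ e : (oslash (oslash A B) C).E,
        (oslash A (oslash B C)).elen (ψ e) = (oslash (oslash A B) C).elen e) ∧
      (∀ u v : (oslash (oslash A B) C).V,
        (oslash A (oslash B C)).edist (φ u) (φ v) = (oslash (oslash A B) C).edist u v) :=
  oslash_assoc_general A B C hB hC
end

section
/- Let 1 ≤ p ≤ 2 and let u, v, w, x be elements of a real L_p space (for instance L_p(μ) for a measure μ, or the sequence space ℓ_p). Then ‖u − w‖_p² + (p − 1)‖x − v‖_p² ≤ ‖u − v‖_p² + ‖v − w‖_p² + ‖x − w‖_p² + ‖u − x‖_p². -/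
/-!
Writing `b = r a` with `0 ≤ r ≤ 1`, Bernoulli's inequality and
`(1 + r)^p + (1 - r)^p ≥ 2 + p (p-1) r²` (two monotonicity arguments) give the two-point inequality
`(a² + (p-1) b²)^(p/2) ≤ (|a+b|^p + |a-b|^p) / 2`. Integrated with the reverse Minkowski
inequality in `L^(p/2)` and the power mean inequality, it yields the Ball–Carlen–Lieb 2-uniform
smoothness inequality `‖f‖² + (p-1)‖g‖² ≤ (‖f+g‖² + ‖f-g‖²) / 2`. Apply it to `f = a + b`,
`g = a - b` for the pairs `(u - v, v - w)` and `(u - x, x - w)`, both with `a + b = u - w`, and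
add: the two `g`-terms differ by `2 (x - v)`, so by the triangle inequality and
`A² + B² ≥ (A + B)² / 2` they dominate `2 (p-1) ‖x - v‖²`.
-/

open Real Set MeasureTheory

lemma two_le_one_add_rpow_add_one_sub_rpow {t r : ℝ} (ht : t ≤ 0) (hr0 : 0 ≤ r) (hr1 : r < 1) :
    2 ≤ (1 + r) ^ t + (1 - r) ^ t := by
  have hprod : 1 ≤ (1 + r) ^ t * (1 - r) ^ t := by
    rw [← mul_rpow (by linarith) (by linarith)]
    exact one_le_rpow_of_pos_of_le_one_of_nonpos (by nlinarith) (by nlinarith) ht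
  nlinarith [sq_nonneg ((1 + r) ^ t - (1 - r) ^ t), rpow_nonneg (by linarith : (0 : ℝ) ≤ 1 + r) t,
    rpow_nonneg (by linarith : (0 : ℝ) ≤ 1 - r) t]

lemma two_mul_mul_le_one_add_rpow_sub_one_sub_rpow {q r : ℝ} (hq0 : 0 ≤ q) (hq1 : q ≤ 1)
    (hr : r ∈ Icc (0 : ℝ) 1) : 2 * q * r ≤ (1 + r) ^ q - (1 - r) ^ q := by
  let h : ℝ → ℝ := fun r ↦ (1 + r) ^ q - (1 - r) ^ q - 2 * q * r
  have hcont : ContinuousOn h (Icc 0 1) := by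
    fun_prop (disch := intros; right; exact hq0)
  have hderiv : ∀ x ∈ Ioo (0 : ℝ) 1,
      HasDerivAt h (q * ((1 + x) ^ (q - 1) + (1 - x) ^ (q - 1) - 2)) x := by
    intro x hx
    have := ((((hasDerivAt_id' x).const_add 1).rpow_const (p := q)
      (Or.inl (by linarith [hx.1]))).sub (((hasDerivAt_id' x).const_sub 1).rpow_const (p := q)
      (Or.inl (by linarith [hx.2])))).sub ((hasDerivAt_id' x).const_mul (2 * q))
    exact this.congr_deriv (by ring)
  have hmono : MonotoneOn h (Icc 0 1) := by
    refine monotoneOn_of_hasDerivWithinAt_nonneg (convex_Icc 0 1) hcont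
      (fun x hx ↦ (hderiv x (by rwa [interior_Icc] at hx)).hasDerivWithinAt) fun x hx ↦ ?_
    rw [interior_Icc] at hx
    have := two_le_one_add_rpow_add_one_sub_rpow (t := q - 1) (by linarith) hx.1.le hx.2
    exact mul_nonneg hq0 (by linarith)
  have := hmono (left_mem_Icc.2 zero_le_one) hr hr.1
  norm_num [h] at this
  linarith

lemma two_add_mul_sq_le_one_add_rpow_add_one_sub_rpow {p r : ℝ} (hp1 : 1 ≤ p) (hp2 : p ≤ 2)
    (hr : r ∈ Icc (0 : ℝ) 1) : 2 + p * (p - 1) * r ^ 2 ≤ (1 + r) ^ p + (1 - r) ^ p := by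
  let g : ℝ → ℝ := fun r ↦ (1 + r) ^ p + (1 - r) ^ p - p * (p - 1) * r ^ 2
  have hcont : ContinuousOn g (Icc 0 1) := by
    have hp0 : 0 ≤ p := by linarith
    fun_prop (disch := intros; right; exact hp0)
  have hderiv : ∀ x ∈ Ioo (0 : ℝ) 1,
      HasDerivAt g (p * ((1 + x) ^ (p - 1) - (1 - x) ^ (p - 1) - 2 * (p - 1) * x)) x := by
    intro x hx
    have := ((((hasDerivAt_id' x).const_add 1).rpow_const (p := p)
      (Or.inl (by linarith [hx.1]))).add (((hasDerivAt_id' x).const_sub 1).rpow_const (p := p)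
      (Or.inl (by linarith [hx.2])))).sub ((hasDerivAt_pow 2 x).const_mul (p * (p - 1)))
    exact this.congr_deriv (by push_cast; ring)
  have hmono : MonotoneOn g (Icc 0 1) := by
    refine monotoneOn_of_hasDerivWithinAt_nonneg (convex_Icc 0 1) hcont
      (fun x hx ↦ (hderiv x (by rwa [interior_Icc] at hx)).hasDerivWithinAt) fun x hx ↦ ?_
    rw [interior_Icc] at hx
    have := two_mul_mul_le_one_add_rpow_sub_one_sub_rpow (q := p - 1) (by linarith)
      (by linarith) (Ioo_subset_Icc_self hx)
    exact mul_nonneg (by linarith) (by linarith)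
  have := hmono (left_mem_Icc.2 zero_le_one) hr hr.1
  norm_num [g] at this
  linarith

lemma sq_add_mul_sq_rpow_le_of_le {p a b : ℝ} (hp1 : 1 ≤ p) (hp2 : p ≤ 2) (hb : 0 ≤ b)
    (hba : b ≤ a) : (a ^ 2 + (p - 1) * b ^ 2) ^ (p / 2) ≤ ((a + b) ^ p + (a - b) ^ p) / 2 := by
  obtain rfl | ha := (hb.trans hba).eq_or_lt
  · obtain rfl : b = 0 := le_antisymm hba hb
    simp [zero_rpow (by linarith : p / 2 ≠ 0), zero_rpow (by linarith : p ≠ 0)]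
  obtain ⟨r, hr, rfl⟩ : ∃ r ∈ Icc (0 : ℝ) 1, b = a * r :=
    ⟨b / a, ⟨by positivity, (div_le_one ha).2 hba⟩, by field_simp⟩
  have bernoulli : (1 + (p - 1) * r ^ 2) ^ (p / 2) ≤ 1 + p / 2 * ((p - 1) * r ^ 2) :=
    rpow_one_add_le_one_add_mul_self (by nlinarith [hr.1]) (by linarith) (by linarith)
  have := two_add_mul_sq_le_one_add_rpow_add_one_sub_rpow hp1 hp2 hr
  have hsq : (a ^ 2) ^ (p / 2) = a ^ p := by
    rw [← rpow_two, ← rpow_mul ha.le]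
    ring_nf
  calc (a ^ 2 + (p - 1) * (a * r) ^ 2) ^ (p / 2)
      = a ^ p * (1 + (p - 1) * r ^ 2) ^ (p / 2) := by
        rw [← hsq, ← mul_rpow (by positivity) (by nlinarith [hr.1])]
        ring_nf
    _ ≤ a ^ p * (((1 + r) ^ p + (1 - r) ^ p) / 2) := by
        gcongr
        linarith
    _ = ((a + a * r) ^ p + (a - a * r) ^ p) / 2 := by
        rw [show a + a * r = a * (1 + r) by ring, show a - a * r = a * (1 - r) by ring,
          mul_rpow ha.le (by linarith [hr.1]), mul_rpow ha.le (by linarith [hr.2])]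
        ring

lemma sq_add_mul_sq_rpow_le {p : ℝ} (hp1 : 1 ≤ p) (hp2 : p ≤ 2) (a b : ℝ) :
    (a ^ 2 + (p - 1) * b ^ 2) ^ (p / 2) ≤ (|a + b| ^ p + |a - b| ^ p) / 2 := by
  wlog ha : 0 ≤ a generalizing a b
  · have := this (-a) (-b) (by linarith)
    rwa [neg_sq, neg_sq, ← neg_add, abs_neg, neg_sub_neg, abs_sub_comm] at this
  wlog hb : 0 ≤ b generalizing b
  · have := this (-b) (by linarith)
    rwa [neg_sq, ← sub_eq_add_neg, sub_neg_eq_add, add_comm (|a - b| ^ p)] at this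
  wlog hba : b ≤ a generalizing a b
  · refine le_trans ?_ ((this b hb a ha (by linarith)).trans_eq
      (by rw [add_comm b a, abs_sub_comm b a]))
    have hab : a ^ 2 ≤ b ^ 2 := pow_le_pow_left₀ ha (not_le.1 hba).le 2
    gcongr ?_ ^ _
    nlinarith
  rw [abs_of_nonneg (by linarith), abs_of_nonneg (by linarith)]
  exact sq_add_mul_sq_rpow_le_of_le hp1 hp2 hb hba

section Integral

variable {Ω : Type*} [MeasurableSpace Ω] {μ : Measure Ω}

lemma integral_Lp_add_ge_of_le_one {s : ℝ} (hs0 : 0 < s) (hs1 : s ≤ 1) {F G : Ω → ℝ}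
    (hF : 0 ≤ F) (hG : 0 ≤ G) (hFi : Integrable (fun x ↦ F x ^ s) μ)
    (hGi : Integrable (fun x ↦ G x ^ s) μ) :
    (∫ x, F x ^ s ∂μ) ^ s⁻¹ + (∫ x, G x ^ s ∂μ) ^ s⁻¹ ≤ (∫ x, (F x + G x) ^ s ∂μ) ^ s⁻¹ := by
  have hr : (ENNReal.ofReal s⁻¹).toReal = s⁻¹ := ENNReal.toReal_ofReal (by positivity)
  have : Fact (1 ≤ ENNReal.ofReal s⁻¹) := ⟨ENNReal.one_le_ofReal.2 (one_le_inv₀ hs0 |>.2 hs1)⟩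
  -- Minkowski's inequality for the integral of `(F^s, G^s)` in `ℓ^(1/s)(ℝ²)`, where the pointwise
  -- norm is `(F + G)^s`.
  let h : Ω → WithLp (ENNReal.ofReal s⁻¹) (ℝ × ℝ) := fun x ↦ WithLp.toLp _ (F x ^ s, G x ^ s)
  have hi : Integrable h μ := Integrable.of_fst_of_snd_prodLp ⟨hFi, hGi⟩
  have hnorm (y : WithLp (ENNReal.ofReal s⁻¹) (ℝ × ℝ)) :
      ‖y‖ = (‖y.fst‖ ^ s⁻¹ + ‖y.snd‖ ^ s⁻¹) ^ s := by
    rw [WithLp.prod_norm_eq_add (by rw [hr]; positivity), hr, one_div, inv_inv]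
  have hpt (x : Ω) : ‖h x‖ = (F x + G x) ^ s := by
    rw [hnorm, WithLp.toLp_fst, WithLp.toLp_snd, norm_of_nonneg (rpow_nonneg (hF x) s),
      norm_of_nonneg (rpow_nonneg (hG x) s), rpow_rpow_inv (hF x) hs0.ne',
      rpow_rpow_inv (hG x) hs0.ne']
  have hA : 0 ≤ ∫ x, F x ^ s ∂μ := integral_nonneg fun x ↦ rpow_nonneg (hF x) s
  have hB : 0 ≤ ∫ x, G x ^ s ∂μ := integral_nonneg fun x ↦ rpow_nonneg (hG x) s
  have key := norm_integral_le_integral_norm (μ := μ) h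
  simp only [hpt] at key
  rw [hnorm, fst_integral_withLp hi, snd_integral_withLp hi] at key
  simp only [h, WithLp.toLp_fst, WithLp.toLp_snd] at key
  rw [norm_of_nonneg hA, norm_of_nonneg hB] at key
  calc _ = (((∫ x, F x ^ s ∂μ) ^ s⁻¹ + (∫ x, G x ^ s ∂μ) ^ s⁻¹) ^ s) ^ s⁻¹ :=
        (rpow_rpow_inv (by positivity) hs0.ne').symm
    _ ≤ _ := by gcongr

namespace MeasureTheory.Lp

variable {E : Type*} [NormedAddCommGroup E] {p : ℝ}

lemma integrable_norm_rpow (hp : 0 < p) (f : Lp E (ENNReal.ofReal p) μ) :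
    Integrable (fun x ↦ ‖f x‖ ^ p) μ := by
  simpa [hp.le] using (Lp.memLp f).integrable_norm_rpow (by simpa using hp) ENNReal.ofReal_ne_top

lemma norm_rpow_eq_integral (hp : 0 < p) (f : Lp E (ENNReal.ofReal p) μ) :
    ‖f‖ ^ p = ∫ x, ‖f x‖ ^ p ∂μ := by
  rw [norm_def, toReal_eLpNorm (Lp.aestronglyMeasurable f),
    lpNorm_eq_integral_norm_rpow_toReal (by simpa using hp) ENNReal.ofReal_ne_top
      (Lp.aestronglyMeasurable f), ENNReal.toReal_ofReal hp.le,
    rpow_inv_rpow (integral_nonneg fun x ↦ by positivity) hp.ne']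

lemma integral_sq_add_mul_sq_rpow_le (hp1 : 1 ≤ p) (hp2 : p ≤ 2)
    (f g : Lp ℝ (ENNReal.ofReal p) μ) :
    ∫ x, (f x ^ 2 + (p - 1) * g x ^ 2) ^ (p / 2) ∂μ ≤ (‖f + g‖ ^ p + ‖f - g‖ ^ p) / 2 := by
  have hp0 : 0 < p := by linarith
  rw [norm_rpow_eq_integral hp0, norm_rpow_eq_integral hp0,
    ← integral_add (integrable_norm_rpow hp0 _) (integrable_norm_rpow hp0 _), ← integral_div]
  refine integral_mono_of_nonneg (.of_forall fun x ↦ by positivity)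
    (((integrable_norm_rpow hp0 _).add (integrable_norm_rpow hp0 _)).div_const 2) ?_
  filter_upwards [coeFn_add f g, coeFn_sub f g] with x hadd hsub
  rw [hadd, hsub, Pi.add_apply, Pi.sub_apply, norm_eq_abs, norm_eq_abs]
  exact sq_add_mul_sq_rpow_le hp1 hp2 _ _

lemma norm_sq_add_mul_norm_sq_le (hp1 : 1 ≤ p) (hp2 : p ≤ 2) [Fact (1 ≤ ENNReal.ofReal p)]
    (f g : Lp ℝ (ENNReal.ofReal p) μ) :
    ‖f‖ ^ 2 + (p - 1) * ‖g‖ ^ 2 ≤ (‖f + g‖ ^ 2 + ‖f - g‖ ^ 2) / 2 := by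
  have hp0 : 0 < p := by linarith
  have hp1' : 0 ≤ p - 1 := by linarith
  have hpow {t : ℝ} (ht : 0 ≤ t) : (t ^ p) ^ (p / 2)⁻¹ = t ^ 2 := by
    rw [← rpow_mul ht, show p * (p / 2)⁻¹ = 2 by field_simp, rpow_two]
  have hsq (y : ℝ) : (y ^ 2) ^ (p / 2) = ‖y‖ ^ p := by
    rw [← sq_abs, ← norm_eq_abs, ← rpow_two, ← rpow_mul (norm_nonneg _)]
    ring_nf
  have hsq' (y : ℝ) : ((p - 1) * y ^ 2) ^ (p / 2) = (p - 1) ^ (p / 2) * ‖y‖ ^ p := by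
    rw [mul_rpow hp1' (sq_nonneg _), hsq]
  have hrev := integral_Lp_add_ge_of_le_one (μ := μ) (s := p / 2) (by positivity) (by linarith)
    (F := fun x ↦ f x ^ 2) (G := fun x ↦ (p - 1) * g x ^ 2) (fun x ↦ sq_nonneg _)
    (fun x ↦ mul_nonneg hp1' (sq_nonneg _)) (by simpa only [hsq] using integrable_norm_rpow hp0 f)
    (by simpa only [hsq'] using (integrable_norm_rpow hp0 g).const_mul _)
  simp only [hsq, hsq', integral_const_mul, ← norm_rpow_eq_integral hp0] at hrev
  rw [mul_rpow (rpow_nonneg hp1' _) (by positivity), rpow_rpow_inv hp1' (by positivity),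
    hpow (norm_nonneg f), hpow (norm_nonneg g)] at hrev
  have hmean := (convexOn_rpow (p := (p / 2)⁻¹) (by rw [one_le_inv₀ (by positivity)]; linarith)).2
    (mem_Ici.2 (by positivity : 0 ≤ ‖f + g‖ ^ p)) (mem_Ici.2 (by positivity : 0 ≤ ‖f - g‖ ^ p))
    (by norm_num : (0 : ℝ) ≤ 1 / 2) (by norm_num : (0 : ℝ) ≤ 1 / 2) (by norm_num)
  calc ‖f‖ ^ 2 + (p - 1) * ‖g‖ ^ 2
      ≤ (∫ x, (f x ^ 2 + (p - 1) * g x ^ 2) ^ (p / 2) ∂μ) ^ (p / 2)⁻¹ := hrev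
    _ ≤ ((‖f + g‖ ^ p + ‖f - g‖ ^ p) / 2) ^ (p / 2)⁻¹ := by
        gcongr
        exact integral_sq_add_mul_sq_rpow_le hp1 hp2 f g
    _ ≤ ((‖f + g‖ ^ p) ^ (p / 2)⁻¹ + (‖f - g‖ ^ p) ^ (p / 2)⁻¹) / 2 := by
        simpa [smul_eq_mul, div_eq_inv_mul, mul_add] using hmean
    _ = (‖f + g‖ ^ 2 + ‖f - g‖ ^ 2) / 2 := by
        rw [hpow (norm_nonneg (f + g)), hpow (norm_nonneg (f - g))]

end MeasureTheory.Lp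

end Integral

lemma four_point_of_norm_sq_add_mul_norm_sq_le {E : Type*} [SeminormedAddCommGroup E]
    [NormedSpace ℝ E] {c : ℝ} (hc : 0 ≤ c)
    (h : ∀ f g : E, ‖f‖ ^ 2 + c * ‖g‖ ^ 2 ≤ (‖f + g‖ ^ 2 + ‖f - g‖ ^ 2) / 2) (u v w x : E) :
    ‖u - w‖ ^ 2 + c * ‖x - v‖ ^ 2 ≤ ‖u - v‖ ^ 2 + ‖v - w‖ ^ 2 + ‖x - w‖ ^ 2 + ‖u - x‖ ^ 2 := by
  have h2 (y : E) : ‖y + y‖ = 2 * ‖y‖ := by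
    rw [← two_smul ℝ y, norm_smul, Real.norm_two]
  have hpar (a b : E) : ‖a + b‖ ^ 2 + c * ‖a - b‖ ^ 2 ≤ 2 * (‖a‖ ^ 2 + ‖b‖ ^ 2) := by
    have := h (a + b) (a - b)
    rw [add_add_sub_cancel, add_sub_sub_cancel, h2, h2] at this
    linarith
  have hv := hpar (u - v) (v - w)
  have hx := hpar (u - x) (x - w)
  rw [sub_add_sub_cancel] at hv hx
  have htri : 2 * ‖x - v‖ ≤ ‖u - v - (v - w)‖ + ‖u - x - (x - w)‖ := by
    rw [← h2, show x - v + (x - v) = (u - v - (v - w)) - (u - x - (x - w)) by abel]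
    exact norm_sub_le _ _
  nlinarith [mul_le_mul_of_nonneg_left (pow_le_pow_left₀ (by positivity) htri 2) hc,
    mul_nonneg hc (sq_nonneg (‖u - v - (v - w)‖ - ‖u - x - (x - w)‖))]

/-- The 4-point inequality in `L_p` for `1 ≤ p ≤ 2`:
`‖u − w‖² + (p−1)‖x − v‖² ≤ ‖u − v‖² + ‖v − w‖² + ‖x − w‖² + ‖u − x‖²`. -/
theorem four_point_ineq_le_two (p : ℝ) (hp1 : 1 ≤ p) (hp2 : p ≤ 2)
    (Ω : Type) (mΩ : MeasurableSpace Ω) (μ : Measure Ω) :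
    haveI : Fact (1 ≤ ENNReal.ofReal p) := ⟨ENNReal.one_le_ofReal.mpr hp1⟩
    ∀ u v w x : Lp ℝ (ENNReal.ofReal p) μ,
      ‖u - w‖ ^ 2 + (p - 1) * ‖x - v‖ ^ 2 ≤
        ‖u - v‖ ^ 2 + ‖v - w‖ ^ 2 + ‖x - w‖ ^ 2 + ‖u - x‖ ^ 2 := by
  have : Fact (1 ≤ ENNReal.ofReal p) := ⟨ENNReal.one_le_ofReal.mpr hp1⟩
  exact four_point_of_norm_sq_add_mul_norm_sq_le (by linarith)
    (Lp.norm_sq_add_mul_norm_sq_le hp1 hp2)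
end

section
/- Let p ≥ 2 and let u, v, w, x be elements of a real L_p space (for instance L_p(μ) for a measure μ, or the sequence space ℓ_p). Then ‖u − w‖_p^p + ‖x − v‖_p^p ≤ 2^{p−2} (‖u − v‖_p^p + ‖v − w‖_p^p + ‖x − w‖_p^p + ‖u − x‖_p^p). -/
/-!
Apply Clarkson's inequality `2 (‖f‖ᵖ + ‖g‖ᵖ) ≤ ‖f + g‖ᵖ + ‖f - g‖ᵖ` to `f = u - w`, `g = x - v`:
then `f + g = (u - v) + (x - w)` and `f - g = (v - w) + (u - x)`, and the power-mean bound
`‖a + b‖ᵖ ≤ 2ᵖ⁻¹ (‖a‖ᵖ + ‖b‖ᵖ)` finishes. Clarkson's inequality is integrated from its pointwise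
version, which for `r = p / 2 ≥ 1` combines superadditivity and convexity of `t ↦ tʳ` with the
parallelogram law.
-/

open MeasureTheory

namespace Real

lemma rpow_add_le_mul_rpow_add_rpow {p a b : ℝ} (ha : 0 ≤ a) (hb : 0 ≤ b) (hp : 1 ≤ p) :
    (a + b) ^ p ≤ 2 ^ (p - 1) * (a ^ p + b ^ p) := by
  lift a to NNReal using ha
  lift b to NNReal using hb
  exact_mod_cast NNReal.rpow_add_le_mul_rpow_add_rpow a b hp

end Real

variable {E : Type*}

lemma norm_add_rpow_le [SeminormedAddGroup E] {p : ℝ} (hp : 1 ≤ p) (a b : E) :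
    ‖a + b‖ ^ p ≤ 2 ^ (p - 1) * (‖a‖ ^ p + ‖b‖ ^ p) :=
  calc ‖a + b‖ ^ p ≤ (‖a‖ + ‖b‖) ^ p := by gcongr; exact norm_add_le a b
    _ ≤ 2 ^ (p - 1) * (‖a‖ ^ p + ‖b‖ ^ p) :=
      Real.rpow_add_le_mul_rpow_add_rpow (norm_nonneg a) (norm_nonneg b) hp

lemma two_mul_norm_rpow_add_norm_rpow_le [NormedAddCommGroup E] [InnerProductSpace ℝ E]
    {p : ℝ} (hp : 2 ≤ p) (a b : E) :
    2 * (‖a‖ ^ p + ‖b‖ ^ p) ≤ ‖a + b‖ ^ p + ‖a - b‖ ^ p := by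
  set r := p / 2 with hr_def
  have hr : 1 ≤ r := by linarith
  have hpow (c : E) : ‖c‖ ^ p = (‖c‖ ^ 2) ^ r := by
    rw [← Real.rpow_natCast, ← Real.rpow_mul (norm_nonneg c), hr_def]
    congr 1; ring
  have hconv : 2 ^ r * (‖a‖ ^ 2 + ‖b‖ ^ 2) ^ r ≤
      2 ^ (r - 1) * ((‖a + b‖ ^ 2) ^ r + (‖a - b‖ ^ 2) ^ r) := by
    rw [← Real.mul_rpow zero_le_two (by positivity), ← parallelogram_law_with_norm ℝ a b]
    exact Real.rpow_add_le_mul_rpow_add_rpow (by positivity) (by positivity) hr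
  rw [Real.rpow_sub_one two_ne_zero, div_mul_eq_mul_div, le_div_iff₀ two_pos,
    mul_comm _ (2 : ℝ)] at hconv
  rw [hpow a, hpow b, hpow (a + b), hpow (a - b)]
  calc 2 * ((‖a‖ ^ 2) ^ r + (‖b‖ ^ 2) ^ r) ≤ 2 * (‖a‖ ^ 2 + ‖b‖ ^ 2) ^ r := by
        gcongr; exact Real.add_rpow_le_rpow_add (by positivity) (by positivity) hr
    _ ≤ (‖a + b‖ ^ 2) ^ r + (‖a - b‖ ^ 2) ^ r :=
        le_of_mul_le_mul_left (by linarith) (by positivity : (0 : ℝ) < 2 ^ r)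

namespace MeasureTheory.Lp

variable {α : Type*} [MeasurableSpace α] {μ : Measure α} {q : ENNReal} [Fact (1 ≤ q)]

lemma norm_rpow_toReal_eq_integral [NormedAddCommGroup E] (hq : q ≠ ⊤) (f : Lp E q μ) :
    ‖f‖ ^ q.toReal = ∫ a, ‖f a‖ ^ q.toReal ∂μ := by
  have hq0 : q ≠ 0 := (zero_lt_one.trans_le Fact.out).ne'
  have hq_pos : 0 < q.toReal := ENNReal.toReal_pos hq0 hq
  rw [Lp.norm_def, (Lp.memLp f).eLpNorm_eq_integral_rpow_norm hq0 hq,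
    ENNReal.toReal_ofReal (by positivity), Real.rpow_inv_rpow (by positivity) hq_pos.ne']

lemma two_mul_norm_rpow_add_norm_rpow_le [NormedAddCommGroup E] [InnerProductSpace ℝ E]
    (hq2 : 2 ≤ q) (hq : q ≠ ⊤) (f g : Lp E q μ) :
    2 * (‖f‖ ^ q.toReal + ‖g‖ ^ q.toReal) ≤ ‖f + g‖ ^ q.toReal + ‖f - g‖ ^ q.toReal := by
  have hq2' : 2 ≤ q.toReal := by simpa using ENNReal.toReal_mono hq hq2
  have hq0 : q ≠ 0 := (zero_lt_one.trans_le Fact.out).ne'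
  have hint (h : Lp E q μ) : Integrable (fun a ↦ ‖h a‖ ^ q.toReal) μ :=
    (Lp.memLp h).integrable_norm_rpow hq0 hq
  simp only [norm_rpow_toReal_eq_integral hq]
  rw [← integral_add (hint f) (hint g), ← integral_add (hint (f + g)) (hint (f - g)),
    ← integral_const_mul]
  refine integral_mono_ae (((hint f).add (hint g)).const_mul 2)
    ((hint (f + g)).add (hint (f - g))) ?_
  filter_upwards [coeFn_add f g, coeFn_sub f g] with a hadd hsub
  rw [hadd, hsub]
  exact _root_.two_mul_norm_rpow_add_norm_rpow_le hq2' (f a) (g a)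

end MeasureTheory.Lp

/-- The 4-point inequality in `L_p` for `p ≥ 2`:
`‖u − w‖^p + ‖x − v‖^p ≤ 2^{p−2}(‖u − v‖^p + ‖v − w‖^p + ‖x − w‖^p + ‖u − x‖^p)`. -/
theorem four_point_ineq_ge_two (p : ℝ) (hp : 2 ≤ p)
    (Ω : Type) (mΩ : MeasurableSpace Ω) (μ : Measure Ω) :
    haveI : Fact (1 ≤ ENNReal.ofReal p) := ⟨ENNReal.one_le_ofReal.mpr (by linarith)⟩
    ∀ u v w x : Lp ℝ (ENNReal.ofReal p) μ,
      ‖u - w‖ ^ p + ‖x - v‖ ^ p ≤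
        (2 : ℝ) ^ (p - 2) * (‖u - v‖ ^ p + ‖v - w‖ ^ p + ‖x - w‖ ^ p + ‖u - x‖ ^ p) := by
  have : Fact (1 ≤ ENNReal.ofReal p) := ⟨ENNReal.one_le_ofReal.mpr (by linarith)⟩
  intro u v w x
  have clarkson := Lp.two_mul_norm_rpow_add_norm_rpow_le
    (by simpa using ENNReal.ofReal_le_ofReal hp) ENNReal.ofReal_ne_top (u - w) (x - v)
  rw [ENNReal.toReal_ofReal (by linarith), show (u - w) + (x - v) = (u - v) + (x - w) by abel,
    show (u - w) - (x - v) = (v - w) + (u - x) by abel] at clarkson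
  have h2 : (2 : ℝ) ^ (p - 1) = 2 * 2 ^ (p - 2) := by
    rw [show p - 1 = 1 + (p - 2) by ring, Real.rpow_add two_pos, Real.rpow_one]
  have power_mean := norm_add_rpow_le (E := Lp ℝ (ENNReal.ofReal p) μ) (by linarith : 1 ≤ p)
  simp only [h2] at power_mean
  linarith [power_mean (u - v) (x - w), power_mean (v - w) (u - x)]
end

section
/- Let G = (V,E) be a finite connected vertex-transitive graph with diameter D ≥ 1, let f : V(G̃) → H be any map into a real Hilbert space H, and let f̄ be its symmetrization. Then: (1) ‖f̄(s) − f̄(t)‖ = ‖f(s) − f(t)‖; (2) for all u, v ∈ V, ‖f̄(s) − f̄(v^{(1)})‖ = ‖f̄(s) − f̄(u^{(1)})‖ and ‖f̄(t) − f̄(v^{(D+1)})‖ = ‖f̄(t) − f̄(u^{(D+1)})‖; (3) for all u, v ∈ V and 1 ≤ i ≤ D, ‖f̄(v^{(i)}) − f̄(v^{(i+1)})‖ = ‖f̄(u^{(i)}) − f̄(u^{(i+1)})‖; and (4) for all u, v ∈ V and 1 ≤ i ≤ D+1, ⟨f̄(s) − f̄(t), f̄(u^{(i)}) − f̄(v^{(i)})⟩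 = 0. -/
open scoped ENNReal

section Tilde

open STGraph

/-- `D` is the diameter of the connected unweighted graph `G`. -/
def IsDiameter {V : Type} (G : SimpleGraph V) (D : ℕ) : Prop :=
  (∀ u v, G.dist u v ≤ D) ∧ ∃ u v, G.dist u v = D

/-- The vertex set of `G̃`: four special vertices `s = Sum.inl 0`, `s' = Sum.inl 1`,
`t' = Sum.inl 2`, `t = Sum.inl 3`, together with the layered vertices `v^{(i)}`. -/
abbrev TVert (V : Type) (D : ℕ) : Type := Fin 4 ⊕ (V × Fin (D + 1))

/-- The edge set of `G̃`: the two edges `(s,s'), (t',t)` of length `3D`; the edges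
`(s', v^{(1)})` and `(v^{(D+1)}, t')` of length `D`; the diagonal edges
`(u^{(i)}, v^{(i+1)})`; the vertical edges `(u^{(j)}, v^{(j)})` (one per unordered edge of
`G`, oriented increasingly); and the edges `(v^{(i)}, v^{(i+1)})`. -/
abbrev TEdge {V : Type} [LinearOrder V] (G : SimpleGraph V) (D : ℕ) : Type :=
  Fin 2 ⊕ ((V ⊕ V) ⊕ (({p : V × V // G.Adj p.1 p.2} × Fin D) ⊕
    (({p : V × V // G.Adj p.1 p.2 ∧ p.1 < p.2} × Fin (D + 1)) ⊕ (V × Fin D))))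

/-- The metric `s`-`t` graph `G̃` built from a finite connected unweighted graph `G`
with diameter `D` (the graph `𝐺⃗` of layers, plus tails `(s,s')`, `(t',t)` of length `3D`). -/
noncomputable def tildeG {V : Type} [Fintype V] [LinearOrder V] (G : SimpleGraph V)
    [DecidableRel G.Adj] (D : ℕ) : STGraph where
  V := TVert V D
  E := TEdge G D
  finV := inferInstance
  finE := inferInstance
  ends := fun e => match e with
    | Sum.inl i => if i = 0 then (Sum.inl 0, Sum.inl 1) else (Sum.inl 2, Sum.inl 3)
    | Sum.inr (Sum.inl (Sum.inl v)) => (Sum.inl 1, Sum.inr (v, 0))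
    | Sum.inr (Sum.inl (Sum.inr v)) => (Sum.inr (v, Fin.last D), Sum.inl 2)
    | Sum.inr (Sum.inr (Sum.inl (p, i))) =>
        (Sum.inr (p.1.1, i.castSucc), Sum.inr (p.1.2, i.succ))
    | Sum.inr (Sum.inr (Sum.inr (Sum.inl (q, j)))) => (Sum.inr (q.1.1, j), Sum.inr (q.1.2, j))
    | Sum.inr (Sum.inr (Sum.inr (Sum.inr (v, i)))) =>
        (Sum.inr (v, i.castSucc), Sum.inr (v, i.succ))
  elen := fun e => match e with
    | Sum.inl _ => 3 * (D : ℝ≥0∞)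
    | Sum.inr (Sum.inl _) => (D : ℝ≥0∞)
    | Sum.inr (Sum.inr _) => 1
  s := Sum.inl 0
  t := Sum.inl 3

/-- A horizontal edge of `G̃` is any edge which is not vertical. -/
def IsHorizontal {V : Type} [LinearOrder V] {G : SimpleGraph V} {D : ℕ} :
    TEdge G D → Prop
  | Sum.inr (Sum.inr (Sum.inr (Sum.inl _))) => False
  | _ => True

end Tilde
section Symmetry

/-- The automorphism group of a simple graph, as a subtype of permutations. -/
abbrev AutG {V : Type} (G : SimpleGraph V) : Type :=
  {π : Equiv.Perm V // ∀ a b, G.Adj (π a) (π b) ↔ G.Adj a b}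

noncomputable instance {V : Type} [Finite V] (G : SimpleGraph V) : Fintype (AutG G) :=
  Fintype.ofFinite _

/-- `G` is vertex-transitive. -/
def VertexTransitive {V : Type} (G : SimpleGraph V) : Prop :=
  ∀ u v : V, ∃ π : AutG G, π.1 u = v

/-- The automorphism `π̃` of `G̃` induced by an automorphism `π` of `G`: it fixes the four
special vertices and maps `v^{(i)}` to `π(v)^{(i)}`. -/
def tildeMap {V : Type} {D : ℕ} (π : Equiv.Perm V) : TVert V D → TVert V D
  | Sum.inl i => Sum.inl i
  | Sum.inr (v, i) => Sum.inr (π v, i)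

/-- The symmetrization `f̄(x) = |Aut(G)|^{-1/2} (f(π̃ x))_{π ∈ Aut(G)}` of a map
`f : V(G̃) → H`, taking values in `ℓ₂(Aut(G); H)`. -/
noncomputable def symHilb {V : Type} [Fintype V] [LinearOrder V] (G : SimpleGraph V) (D : ℕ)
    {H : Type} [NormedAddCommGroup H] [NormedSpace ℝ H] (f : TVert V D → H) :
    TVert V D → PiLp 2 (fun _ : AutG G => H) :=
  fun x => (WithLp.equiv 2 (∀ _ : AutG G, H)).symm
    (fun π => (Real.sqrt (Fintype.card (AutG G)))⁻¹ • f (tildeMap π.1 x))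

/-- The `p`-symmetrization `f̄(x) = |Aut(G)|^{-1/p} (f(π̃ x))_{π ∈ Aut(G)}` of a map
`f : V(G̃) → E`, taking values in the `p`-direct sum `ℓ_p(Aut(G); E)`. -/
noncomputable def symLp {V : Type} [Fintype V] [LinearOrder V] (G : SimpleGraph V) (D : ℕ)
    (p : ℝ) {E : Type} [NormedAddCommGroup E] [NormedSpace ℝ E] (f : TVert V D → E) :
    TVert V D → PiLp (ENNReal.ofReal p) (fun _ : AutG G => E) :=
  fun x => (WithLp.equiv (ENNReal.ofReal p) (∀ _ : AutG G, E)).symm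
    (fun π => ((Fintype.card (AutG G) : ℝ) ^ (-(1/p))) • f (tildeMap π.1 x))

end Symmetry

/-!
Inner products of differences of values of `f̄` are averages over `π ∈ Aut(G)` of the
corresponding inner products for `f ∘ π̃`. The vertices `s, s', t', t` are fixed by every `π̃`,
which gives (1). The other quantities come from families of vertices `v ↦ x_v` with
`π̃ x_v = x_{π v}`; reindexing `Aut(G)` by `π ↦ π σ` with `σ u = v` shows that their averages do
not depend on `v`, which gives (2)–(4).
-/

section Symmetrization

variable {V : Type} {G : SimpleGraph V}

def AutG.mulRight (σ : AutG G) : AutG G ≃ AutG G where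
  toFun π := ⟨π.1 * σ.1, fun a b => by simp only [Equiv.Perm.mul_apply, π.2, σ.2]⟩
  invFun π := ⟨π.1 * σ.1⁻¹, fun a b => by
    rw [Equiv.Perm.mul_apply, Equiv.Perm.mul_apply, π.2, ← σ.2]
    simp⟩
  left_inv π := by ext a; simp
  right_inv π := by ext a; simp

instance AutG.instNonempty : Nonempty (AutG G) := ⟨⟨1, fun _ _ => Iff.rfl⟩⟩

theorem VertexTransitive.sum_apply_eq [Finite V] (htrans : VertexTransitive G)
    {M : Type} [AddCommMonoid M] (h : V → M) (u v : V) :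
    ∑ π : AutG G, h (π.1 u) = ∑ π : AutG G, h (π.1 v) := by
  obtain ⟨σ, rfl⟩ := htrans u v
  exact (Fintype.sum_equiv (AutG.mulRight σ) _ _ fun _ => rfl).symm

theorem tildeMap_inl {D : ℕ} (π : Equiv.Perm V) (a : Fin 4) :
    tildeMap (D := D) π (Sum.inl a) = Sum.inl a := rfl

def IsEquivariantFamily {D : ℕ} (p : V → TVert V D) : Prop :=
  ∀ (π : Equiv.Perm V) v, tildeMap π (p v) = p (π v)

variable [Fintype V] [LinearOrder V] {D : ℕ} {H : Type} [NormedAddCommGroup H]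

theorem symHilb_apply [NormedSpace ℝ H] (f : TVert V D → H) (x : TVert V D) (π : AutG G) :
    symHilb G D f x π = (√(Fintype.card (AutG G)))⁻¹ • f (tildeMap π.1 x) := rfl

open scoped RealInnerProductSpace

variable [InnerProductSpace ℝ H] (f : TVert V D → H)

theorem inner_symHilb_sub (x y z w : TVert V D) :
    ⟪symHilb G D f x - symHilb G D f y, symHilb G D f z - symHilb G D f w⟫ =
      (Fintype.card (AutG G) : ℝ)⁻¹ * ∑ π : AutG G,
        ⟪f (tildeMap π.1 x) - f (tildeMap π.1 y), f (tildeMap π.1 z) - f (tildeMap π.1 w)⟫ := by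
  simp only [PiLp.inner_apply, PiLp.sub_apply, symHilb_apply, ← smul_sub, real_inner_smul_left,
    real_inner_smul_right, ← mul_assoc, ← mul_inv, Real.mul_self_sqrt (Nat.cast_nonneg _),
    Finset.mul_sum]

theorem norm_sq_symHilb_sub (x y : TVert V D) :
    ‖symHilb G D f x - symHilb G D f y‖ ^ 2 =
      (Fintype.card (AutG G) : ℝ)⁻¹ * ∑ π : AutG G,
        ‖f (tildeMap π.1 x) - f (tildeMap π.1 y)‖ ^ 2 := by
  simp only [← real_inner_self_eq_norm_sq, inner_symHilb_sub]

theorem norm_symHilb_sub_inl (a b : Fin 4) :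
    ‖symHilb G D f (Sum.inl a) - symHilb G D f (Sum.inl b)‖ = ‖f (Sum.inl a) - f (Sum.inl b)‖ := by
  have hcard : (Fintype.card (AutG G) : ℝ) ≠ 0 := by positivity
  rw [← sq_eq_sq₀ (norm_nonneg _) (norm_nonneg _), norm_sq_symHilb_sub]
  simp only [tildeMap_inl, Finset.sum_const, Finset.card_univ, nsmul_eq_mul,
    inv_mul_cancel_left₀ hcard]

variable {f}

theorem VertexTransitive.norm_symHilb_sub_eq (htrans : VertexTransitive G)
    {p q : V → TVert V D} (hp : IsEquivariantFamily p) (hq : IsEquivariantFamily q) (u v : V) :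
    ‖symHilb G D f (p u) - symHilb G D f (q u)‖ = ‖symHilb G D f (p v) - symHilb G D f (q v)‖ := by
  rw [← sq_eq_sq₀ (norm_nonneg _) (norm_nonneg _), norm_sq_symHilb_sub, norm_sq_symHilb_sub]
  simp only [hp _, hq _, htrans.sum_apply_eq (fun w => ‖f (p w) - f (q w)‖ ^ 2) u v]

theorem VertexTransitive.inner_symHilb_sub_eq_zero (htrans : VertexTransitive G) (a b : Fin 4)
    {p : V → TVert V D} (hp : IsEquivariantFamily p) (u v : V) :
    ⟪symHilb G D f (Sum.inl a) - symHilb G D f (Sum.inl b),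
      symHilb G D f (p u) - symHilb G D f (p v)⟫ = 0 := by
  rw [inner_symHilb_sub]
  simp only [tildeMap_inl, hp _, inner_sub_right, Finset.sum_sub_distrib,
    htrans.sum_apply_eq (fun w => ⟪f (Sum.inl a) - f (Sum.inl b), f (p w)⟫) u v, sub_self,
    mul_zero]

end Symmetrization

open STGraph in
open scoped RealInnerProductSpace in
theorem symmetrization_facts_general {V : Type} [Fintype V] [LinearOrder V] (G : SimpleGraph V)
    (D : ℕ) (htrans : VertexTransitive G)
    (H : Type) [NormedAddCommGroup H] [InnerProductSpace ℝ H]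
    (f : TVert V D → H) :
    (‖symHilb G D f (Sum.inl 0) - symHilb G D f (Sum.inl 3)‖ =
        ‖f (Sum.inl 0) - f (Sum.inl 3)‖) ∧
    (∀ u v : V,
      ‖symHilb G D f (Sum.inl 0) - symHilb G D f (Sum.inr (v, 0))‖ =
        ‖symHilb G D f (Sum.inl 0) - symHilb G D f (Sum.inr (u, 0))‖ ∧
      ‖symHilb G D f (Sum.inl 3) - symHilb G D f (Sum.inr (v, Fin.last D))‖ =
        ‖symHilb G D f (Sum.inl 3) - symHilb G D f (Sum.inr (u, Fin.last D))‖) ∧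
    (∀ (u v : V) (i : Fin D),
      ‖symHilb G D f (Sum.inr (v, i.castSucc)) - symHilb G D f (Sum.inr (v, i.succ))‖ =
        ‖symHilb G D f (Sum.inr (u, i.castSucc)) - symHilb G D f (Sum.inr (u, i.succ))‖) ∧
    (∀ (u v : V) (i : Fin (D + 1)),
      ⟪symHilb G D f (Sum.inl 0) - symHilb G D f (Sum.inl 3),
        symHilb G D f (Sum.inr (u, i)) - symHilb G D f (Sum.inr (v, i))⟫ = 0) := by
  refine ⟨norm_symHilb_sub_inl f 0 3, fun u v => ⟨?_, ?_⟩, fun u v i => ?_, fun u v i => ?_⟩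
  · exact htrans.norm_symHilb_sub_eq (p := fun _ => Sum.inl 0) (q := fun w => Sum.inr (w, 0))
      (fun _ _ => rfl) (fun _ _ => rfl) v u
  · exact htrans.norm_symHilb_sub_eq (p := fun _ => Sum.inl 3)
      (q := fun w => Sum.inr (w, Fin.last D)) (fun _ _ => rfl) (fun _ _ => rfl) v u
  · exact htrans.norm_symHilb_sub_eq (p := fun w => Sum.inr (w, i.castSucc))
      (q := fun w => Sum.inr (w, i.succ)) (fun _ _ => rfl) (fun _ _ => rfl) v u
  · exact htrans.inner_symHilb_sub_eq_zero 0 3 (p := fun w => Sum.inr (w, i)) (fun _ _ => rfl) u v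

open STGraph in
open scoped RealInnerProductSpace in
/-- Properties of the symmetrization `f̄` of a map `f : V(G̃) → H` into a real Hilbert space,
for a vertex-transitive `G`: (1) `‖f̄(s) − f̄(t)‖ = ‖f(s) − f(t)‖`; (2) the distances from
`f̄(s)` to the first layer and from `f̄(t)` to the last layer do not depend on the vertex;
(3) `‖f̄(v^{(i)}) − f̄(v^{(i+1)})‖` does not depend on `v`; (4) differences of symmetrized
images within one layer are orthogonal to `f̄(s) − f̄(t)`. -/
theorem symmetrization_facts {V : Type} [Fintype V] [LinearOrder V] (G : SimpleGraph V)
    [DecidableRel G.Adj] (hconn : G.Connected) (D : ℕ) (hD : 1 ≤ D)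
    (hdiam : IsDiameter G D) (htrans : VertexTransitive G)
    (H : Type) [NormedAddCommGroup H] [InnerProductSpace ℝ H] [CompleteSpace H]
    (f : TVert V D → H) :
    (‖symHilb G D f (Sum.inl 0) - symHilb G D f (Sum.inl 3)‖ =
        ‖f (Sum.inl 0) - f (Sum.inl 3)‖) ∧
    (∀ u v : V,
      ‖symHilb G D f (Sum.inl 0) - symHilb G D f (Sum.inr (v, 0))‖ =
        ‖symHilb G D f (Sum.inl 0) - symHilb G D f (Sum.inr (u, 0))‖ ∧
      ‖symHilb G D f (Sum.inl 3) - symHilb G D f (Sum.inr (v, Fin.last D))‖ =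
        ‖symHilb G D f (Sum.inl 3) - symHilb G D f (Sum.inr (u, Fin.last D))‖) ∧
    (∀ (u v : V) (i : Fin D),
      ‖symHilb G D f (Sum.inr (v, i.castSucc)) - symHilb G D f (Sum.inr (v, i.succ))‖ =
        ‖symHilb G D f (Sum.inr (u, i.castSucc)) - symHilb G D f (Sum.inr (u, i.succ))‖) ∧
    (∀ (u v : V) (i : Fin (D + 1)),
      ⟪symHilb G D f (Sum.inl 0) - symHilb G D f (Sum.inl 3),
        symHilb G D f (Sum.inr (u, i)) - symHilb G D f (Sum.inr (v, i))⟫ = 0) :=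
  symmetrization_facts_general G D htrans H f
end
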